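/- Let d ≥ 6 and m ≥ d + 1 be integers, and let v_1, …, v_m be independent random points, each distributed according to the uniform (rotation-invariant) probability measure on the unit sphere S^{d−1} ⊆ ℝ^d. Let P = conv(v_1, …, v_m). Then with probability at least 1 − 2·exp(d·log m − m/20), the convex hull P contains the Euclidean ball of radius 1/(2√d) centered at the origin, and consequently varv(P) ≥ (1/(2√d))^d. -/

import Mathlib

/-!
Take a `2/(m-1)`-net `T` of the unit sphere; a volumetric packing bound gives `|T| ≤ m^d`.
Rotation invariance forces `⟪x, t⟫` to have second moment `1/d` and fourth moment
`3/(d(d+2))` for a unit vector `t`, so by Paley–Zygmund the cap `{x | ρ ≤ ⟪x, t⟫}`, with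
`ρ = 1/(2√d) + 2/(m-1)`, has mass at least `1/20`. All `m` independent samples miss a fixed cap
with probability at most `(19/20)^m ≤ e^{-m/20}`, so outside an event of probability
`m^d e^{-m/20}` every cap of the net contains a sample. Then every unit vector `u` has a sample
with `⟪v i, u⟫ ≥ 1/(2√d)`, and by Hahn–Banach the hull contains the ball of radius `1/(2√d)`.
When the claimed bound is not vacuous, `m ≥ 40 d`, which keeps `ρ` small enough.
-/

open MeasureTheory ProbabilityTheory Metric Module
open scoped RealInnerProductSpace ENNReal

noncomputable def varv {d : ℕ} (A : Set (EuclideanSpace ℝ (Fin d))) : ℝ :=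
  (MeasureTheory.volume A).toReal * Real.Gamma (1 + (d : ℝ) / 2) / Real.pi ^ ((d : ℝ) / 2)

section Net

variable {E : Type*} [NormedAddCommGroup E] [NormedSpace ℝ E] [FiniteDimensional ℝ E]

theorem card_mul_pow_le_of_isSeparated {R : ℝ} (hR : 0 ≤ R) {T : Finset E}
    (hT : ↑T ⊆ closedBall (0 : E) R) {δ : ℝ} (hδ : 0 < δ)
    (hsep : IsSeparated (ENNReal.ofReal (2 * δ)) (T : Set E)) :
    (T.card : ℝ) * δ ^ finrank ℝ E ≤ (R + δ) ^ finrank ℝ E := by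
  borelize E
  set μ : Measure E := Measure.addHaar
  have hdisj : (T : Set E).PairwiseDisjoint (ball · δ) := fun x hx y hy hxy =>
    ball_disjoint_ball <| by
      have : ENNReal.ofReal (2 * δ) < edist x y := hsep hx hy hxy
      rw [edist_dist, ENNReal.ofReal_lt_ofReal_iff_of_nonneg (by positivity)] at this
      linarith
  have hunion : (⋃ t ∈ T, ball t δ) ⊆ ball (0 : E) (R + δ) := by
    simp only [Set.iUnion_subset_iff]
    intro t ht
    exact ball_subset_ball' (by linarith [mem_closedBall.mp (hT ht)])
  have hvol : (T.card : ℝ≥0∞) * ENNReal.ofReal (δ ^ finrank ℝ E) * μ (ball 0 1) ≤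
      ENNReal.ofReal ((R + δ) ^ finrank ℝ E) * μ (ball 0 1) :=
    calc (T.card : ℝ≥0∞) * ENNReal.ofReal (δ ^ finrank ℝ E) * μ (ball 0 1)
        = ∑ t ∈ T, μ (ball t δ) := by
          simp [Measure.addHaar_ball_of_pos μ _ hδ, mul_assoc]
      _ = μ (⋃ t ∈ T, ball t δ) :=
          (measure_biUnion_finset hdisj fun _ _ => measurableSet_ball).symm
      _ ≤ μ (ball 0 (R + δ)) := measure_mono hunion
      _ = _ := Measure.addHaar_ball_of_pos μ _ (by linarith)
  rwa [ENNReal.mul_le_mul_iff_left (measure_ball_pos μ _ one_pos).ne' measure_ball_lt_top.ne,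
    ← ENNReal.ofReal_natCast, ← ENNReal.ofReal_mul (by positivity),
    ENNReal.ofReal_le_ofReal_iff (by positivity)] at hvol

theorem exists_finset_subset_forall_dist_le_card_le {R : ℝ} (hR : 0 ≤ R) {s : Set E}
    (hs : s ⊆ closedBall (0 : E) R) {δ : ℝ} (hδ : 0 < δ) :
    ∃ T : Finset E, ↑T ⊆ s ∧ (∀ x ∈ s, ∃ t ∈ T, dist x t ≤ 2 * δ) ∧
      (T.card : ℝ) ≤ (R / δ + 1) ^ finrank ℝ E := by
  lift δ to NNReal using hδ.le
  have hfin : packingNumber (2 * δ) s ≠ ⊤ := by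
    obtain ⟨N, -, hN, hcover⟩ := exists_finite_isCover_of_isCompact_closure (ε := δ)
      (ne_of_gt hδ) ((isCompact_closedBall 0 R).of_isClosed_subset isClosed_closure
        (closure_minimal hs isClosed_closedBall))
    exact ne_top_of_le_ne_top (Set.encard_ne_top_iff.mpr hN)
      ((packingNumber_two_mul_le_externalCoveringNumber δ s).trans
        hcover.externalCoveringNumber_le_encard)
  have hT : (maximalSeparatedSet (2 * δ) s).Finite :=
    Set.encard_ne_top_iff.mp (encard_maximalSeparatedSet hfin ▸ hfin)
  refine ⟨hT.toFinset, by simpa using maximalSeparatedSet_subset, fun x hx => ?_, ?_⟩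
  · obtain ⟨t, ht, hxt⟩ := Set.mem_iUnion₂.mp
      (isCover_iff_subset_iUnion_closedBall.mp (isCover_maximalSeparatedSet hfin) hx)
    exact ⟨t, hT.mem_toFinset.mpr ht, by simpa using hxt⟩
  · have hsep : IsSeparated (ENNReal.ofReal (2 * δ)) (maximalSeparatedSet (2 * δ) s) := by
      rw [show (2 : ℝ) * δ = ((2 * δ : NNReal) : ℝ) by push_cast; ring,
        ENNReal.ofReal_coe_nnreal]
      simpa using isSeparated_maximalSeparatedSet (ε := 2 * δ) (A := s)
    have hpack := card_mul_pow_le_of_isSeparated hR (T := hT.toFinset)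
      (by simpa using maximalSeparatedSet_subset.trans hs) hδ (by simpa using hsep)
    rw [show R + δ = (R / δ + 1) * δ by field_simp, mul_pow] at hpack
    exact le_of_mul_le_mul_right hpack (pow_pos (NNReal.coe_pos.mpr hδ) _)

end Net

section ConvexHull

variable {E : Type*} [NormedAddCommGroup E] [InnerProductSpace ℝ E]

theorem closedBall_subset_convexHull_of_forall_exists_le_inner [CompleteSpace E] {s : Set E}
    (hs : s.Finite) (hne : s.Nonempty) {r : ℝ} (h : ∀ u : E, ‖u‖ = 1 → ∃ x ∈ s, r ≤ ⟪x, u⟫) :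
    closedBall 0 r ⊆ convexHull ℝ s := by
  intro y hy
  by_contra hyC
  obtain ⟨f, c, hfc, hcy⟩ := geometric_hahn_banach_closed_point (convex_convexHull ℝ s)
    (hs.isCompact_convexHull (𝕜 := ℝ)).isClosed hyC
  set w := (InnerProductSpace.toDual ℝ E).symm f
  have hw : ∀ z, ⟪z, w⟫ = f z := fun z => by
    rw [real_inner_comm, InnerProductSpace.toDual_symm_apply]
  have hlt : ∀ x ∈ s, ⟪x, w⟫ < ⟪y, w⟫ := fun x hx => by
    rw [hw, hw]; exact (hfc x (subset_convexHull ℝ s hx)).trans hcy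
  have hw0 : w ≠ 0 := by
    rintro h0
    obtain ⟨x, hx⟩ := hne
    simpa [h0] using hlt x hx
  have hunit : ‖‖w‖⁻¹ • w‖ = 1 := norm_smul_inv_norm hw0
  obtain ⟨x, hx, hrx⟩ := h _ hunit
  have hxy : ⟪x, ‖w‖⁻¹ • w⟫ < ⟪y, ‖w‖⁻¹ • w⟫ := by
    simp only [real_inner_smul_right]
    exact mul_lt_mul_of_pos_left (hlt x hx) (by positivity)
  have hyr : ⟪y, ‖w‖⁻¹ • w⟫ ≤ r := (real_inner_le_norm _ _).trans <| by
    rwa [hunit, mul_one, ← dist_zero_right]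
  linarith

theorem le_inner_of_dist_le {x u t : E} (hx : ‖x‖ ≤ 1) {r ε : ℝ} (hut : dist u t ≤ ε)
    (h : r + ε ≤ ⟪x, t⟫) : r ≤ ⟪x, u⟫ := by
  have : ⟪x, t - u⟫ ≤ ε := (real_inner_le_norm _ _).trans <| by
    rw [← dist_eq_norm, dist_comm]
    nlinarith [norm_nonneg x, dist_nonneg (x := u) (y := t)]
  rw [inner_sub_right] at this
  linarith

theorem closedBall_subset_convexHull_of_forall_dist_le [CompleteSpace E] {s T : Set E}
    (hs : s.Finite) (hne : s.Nonempty) (hs1 : ∀ x ∈ s, ‖x‖ ≤ 1) {r ε : ℝ}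
    (hT : ∀ u : E, ‖u‖ = 1 → ∃ t ∈ T, dist u t ≤ ε) (hcap : ∀ t ∈ T, ∃ x ∈ s, r + ε ≤ ⟪x, t⟫) :
    closedBall 0 r ⊆ convexHull ℝ s :=
  closedBall_subset_convexHull_of_forall_exists_le_inner hs hne fun u hu => by
    obtain ⟨t, ht, hut⟩ := hT u hu
    obtain ⟨x, hx, hxt⟩ := hcap t ht
    exact ⟨x, hx, le_inner_of_dist_le (hs1 x hx) hut hxt⟩

end ConvexHull

section Varv

variable {d : ℕ}

theorem varv_closedBall (hd : d ≠ 0) {r : ℝ} (hr : 0 ≤ r) :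
    varv (closedBall (0 : EuclideanSpace ℝ (Fin d)) r) = r ^ d := by
  have : Nonempty (Fin d) := ⟨⟨0, Nat.pos_of_ne_zero hd⟩⟩
  have hΓ : 0 < Real.Gamma (1 + (d : ℝ) / 2) := Real.Gamma_pos_of_pos (by positivity)
  have hπ : √Real.pi ^ d = Real.pi ^ ((d : ℝ) / 2) := by
    rw [Real.sqrt_eq_rpow, ← Real.rpow_natCast, ← Real.rpow_mul Real.pi_pos.le]
    ring_nf
  rw [varv, EuclideanSpace.volume_closedBall, ENNReal.toReal_mul, ENNReal.toReal_pow,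
    ENNReal.toReal_ofReal hr, ENNReal.toReal_ofReal (by positivity), Fintype.card_fin, hπ,
    add_comm ((d : ℝ) / 2)]
  field_simp

theorem varv_mono {A B : Set (EuclideanSpace ℝ (Fin d))} (h : A ⊆ B) (hB : volume B ≠ ⊤) :
    varv A ≤ varv B := by
  unfold varv
  gcongr

end Varv

section PaleyZygmund

variable {α : Type*} [MeasurableSpace α] {μ : Measure α}

theorem sq_setIntegral_le_measureReal_mul_setIntegral_sq {A : Set α} (hA : μ A ≠ ⊤)
    {f : α → ℝ} (hf : IntegrableOn f A μ) (hf2 : IntegrableOn (fun x => f x ^ 2) A μ) :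
    (∫ x in A, f x ∂μ) ^ 2 ≤ μ.real A * ∫ x in A, f x ^ 2 ∂μ := by
  rcases eq_or_ne (μ A) 0 with h0 | h0
  · simp [Measure.restrict_eq_zero.mpr h0]
  have hpos : 0 < μ.real A := ENNReal.toReal_pos h0 hA
  have hJensen := (even_two.convexOn_pow (𝕜 := ℝ)).map_set_average_le
    (continuous_pow 2).continuousOn isClosed_univ h0 hA (by simp) hf hf2
  simp only [setAverage_eq, smul_eq_mul] at hJensen
  calc (∫ x in A, f x ∂μ) ^ 2 = μ.real A ^ 2 * ((μ.real A)⁻¹ * ∫ x in A, f x ∂μ) ^ 2 := by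
        field_simp
    _ ≤ μ.real A ^ 2 * ((μ.real A)⁻¹ * ∫ x in A, f x ^ 2 ∂μ) := by gcongr
    _ = μ.real A * ∫ x in A, f x ^ 2 ∂μ := by field_simp

/-- The Paley–Zygmund inequality. -/
theorem sq_integral_sub_le_measureReal_mul_integral_sq [IsProbabilityMeasure μ] {Z : α → ℝ}
    (hZm : Measurable Z) (hZ : Integrable Z μ) (hZ2 : Integrable (fun x => Z x ^ 2) μ) {t : ℝ}
    (ht : 0 ≤ t) (htZ : t ≤ ∫ x, Z x ∂μ) :
    (∫ x, Z x ∂μ - t) ^ 2 ≤ μ.real {x | t ≤ Z x} * ∫ x, Z x ^ 2 ∂μ := by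
  set A := {x | t ≤ Z x}
  have hA : MeasurableSet A := measurableSet_le measurable_const hZm
  have hcompl : ∫ x in Aᶜ, Z x ∂μ ≤ t :=
    calc ∫ x in Aᶜ, Z x ∂μ ≤ ∫ x in Aᶜ, t ∂μ :=
          setIntegral_mono_on hZ.integrableOn (integrableOn_const (measure_ne_top _ _))
            hA.compl fun x (hx : ¬t ≤ Z x) => (not_le.mp hx).le
      _ = μ.real Aᶜ * t := by rw [setIntegral_const, smul_eq_mul]
      _ ≤ t := mul_le_of_le_one_left ht measureReal_le_one
  have hsplit := integral_add_compl hA hZ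
  calc (∫ x, Z x ∂μ - t) ^ 2 ≤ (∫ x in A, Z x ∂μ) ^ 2 :=
        pow_le_pow_left₀ (by linarith) (by linarith) 2
    _ ≤ μ.real A * ∫ x in A, Z x ^ 2 ∂μ :=
        sq_setIntegral_le_measureReal_mul_setIntegral_sq (measure_ne_top _ _) hZ.integrableOn
          hZ2.integrableOn
    _ ≤ μ.real A * ∫ x, Z x ^ 2 ∂μ := mul_le_mul_of_nonneg_left
        (setIntegral_le_integral hZ2 (ae_of_all _ fun x => sq_nonneg _)) measureReal_nonneg

end PaleyZygmund

theorem measure_biUnion_iInter_preimage_le {Ω ι κ F : Type*} [MeasurableSpace Ω]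
    [MeasurableSpace F] [Fintype ι] {Pr : Measure Ω} {μ : Measure F} {v : ι → Ω → F}
    (hmeas : ∀ i, Measurable (v i)) (hlaw : ∀ i, Pr.map (v i) = μ) (hindep : iIndepFun v Pr)
    {B : κ → Set F} {T : Finset κ} (hB : ∀ k ∈ T, MeasurableSet (B k)) {p : ℝ≥0∞}
    (hp : ∀ k ∈ T, μ (B k) ≤ p) :
    Pr (⋃ k ∈ T, ⋂ i, v i ⁻¹' B k) ≤ T.card * p ^ Fintype.card ι := by
  calc Pr (⋃ k ∈ T, ⋂ i, v i ⁻¹' B k) ≤ ∑ k ∈ T, Pr (⋂ i, v i ⁻¹' B k) :=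
        measure_biUnion_finset_le _ _
    _ ≤ ∑ _k ∈ T, p ^ Fintype.card ι := Finset.sum_le_sum fun k hk => by
        rw [hindep.meas_iInter fun i => ⟨B k, hB k hk, rfl⟩]
        calc ∏ i, Pr (v i ⁻¹' B k) = ∏ _i : ι, μ (B k) := Finset.prod_congr rfl fun i _ => by
              rw [← hlaw i, Measure.map_apply (hmeas i) (hB k hk)]
          _ ≤ p ^ Fintype.card ι := by
              rw [Finset.prod_const, Finset.card_univ]
              exact pow_le_pow_left' (hp k hk) _
    _ = T.card * p ^ Fintype.card ι := by rw [Finset.sum_const, nsmul_eq_mul]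

theorem mul_sq_one_div_two_mul_sqrt_add_le {n M : ℝ} (hn : 0 < n) (hM : 50 * √n ≤ M) :
    n * (1 / (2 * √n) + 2 * (1 / M)) ^ 2 ≤ 3 / 10 := by
  have hs : 0 < √n := Real.sqrt_pos.mpr hn
  have hM0 : 0 < M := by linarith
  have hk : √n / M ≤ 1 / 50 := by rw [div_le_iff₀ hM0]; linarith
  have : n * (1 / (2 * √n) + 2 * (1 / M)) ^ 2 = (1 / 2 + 2 * (√n / M)) ^ 2 := by
    nth_rewrite 1 [← Real.sq_sqrt hn.le]
    rw [← mul_pow]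
    congr 1
    field_simp
  rw [this]
  nlinarith [div_pos hs hM0]

theorem fifty_mul_sqrt_le_sub_one_of_two_mul_exp_lt_one {d m : ℕ} (hd : 6 ≤ d) (hm : d + 1 ≤ m)
    (h : 2 * Real.exp (d * Real.log m - m / 20) < 1) : 50 * √(d : ℝ) ≤ m - 1 := by
  have hm7 : (7 : ℝ) ≤ m := by exact_mod_cast (by omega : 7 ≤ m)
  have hd6 : (6 : ℝ) ≤ d := by exact_mod_cast hd
  have hlog : 20 * (d * Real.log m) < m := by
    have : d * Real.log m - m / 20 < 0 := by
      by_contra! h0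
      linarith [Real.one_le_exp h0]
    linarith
  -- Bootstrap `20 d log m < m`: `log m ≥ 1` gives `m > 120 > e²`, so `log m ≥ 2` and `m > 40 d`.
  have he : Real.exp 1 < 3 := Real.exp_one_lt_d9.trans (by norm_num)
  have hlog1 : 1 ≤ Real.log m := (Real.le_log_iff_exp_le (by linarith)).mpr (by linarith)
  have hlog2 : 2 ≤ Real.log m := by
    rw [Real.le_log_iff_exp_le (by linarith), show (2 : ℝ) = 1 + 1 by norm_num, Real.exp_add]
    nlinarith [Real.exp_pos 1]
  have hs := Real.sq_sqrt (show (0 : ℝ) ≤ d by positivity)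
  have hs2 : 2 ≤ √(d : ℝ) := by nlinarith [Real.sqrt_nonneg d]
  nlinarith

section Sphere

variable {E : Type*} [NormedAddCommGroup E] [InnerProductSpace ℝ E]

theorem exists_linearIsometryEquiv_inner_eq {u w : E} (h : ‖u‖ = ‖w‖) :
    ∃ O : E ≃ₗᵢ[ℝ] E, ∀ x, ⟪O x, w⟫ = ⟪x, u⟫ := by
  set O := Submodule.reflection (ℝ ∙ (u - w))ᗮ
  refine ⟨O, fun x => ?_⟩
  calc ⟪O x, w⟫ = ⟪O x, O u⟫ := by rw [Submodule.reflection_sub h]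
    _ = ⟪x, u⟫ := O.inner_map_map x u

variable [MeasurableSpace E]

/-- The uniform probability measure on the unit sphere is the rotation-invariant one. -/
structure IsRotationInvariantOnSphere (μ : Measure E) : Prop where
  ae_norm_eq_one : ∀ᵐ x ∂μ, ‖x‖ = 1
  map_eq : ∀ O : E ≃ₗᵢ[ℝ] E, μ.map (fun x => O x) = μ

variable [BorelSpace E]

namespace IsRotationInvariantOnSphere

variable {μ : Measure E}

theorem map_inner_eq (hμ : IsRotationInvariantOnSphere μ) {u w : E} (h : ‖u‖ = ‖w‖) :
    μ.map (fun x => ⟪x, u⟫) = μ.map (fun x => ⟪x, w⟫) := by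
  obtain ⟨O, hO⟩ := exists_linearIsometryEquiv_inner_eq h
  conv_rhs => rw [← hμ.map_eq O]
  rw [Measure.map_map (by fun_prop) O.continuous.measurable]
  simp only [Function.comp_def, hO]

theorem integral_inner_pow (hμ : IsRotationInvariantOnSphere μ) {e : E} (he : ‖e‖ = 1) (w : E)
    (k : ℕ) : ∫ x, ⟪x, w⟫ ^ k ∂μ = ‖w‖ ^ k * ∫ x, ⟪x, e⟫ ^ k ∂μ := by
  have hmap := hμ.map_inner_eq (u := w) (w := ‖w‖ • e) (by simp [norm_smul, he])
  have hint : ∀ u : E, ∫ x, ⟪x, u⟫ ^ k ∂μ = ∫ y, y ^ k ∂μ.map (fun x => ⟪x, u⟫) := fun u =>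
    (integral_map (by fun_prop) (continuous_pow k).aestronglyMeasurable).symm
  rw [hint, hmap, ← hint, ← integral_const_mul]
  simp only [real_inner_smul_right, mul_pow]

theorem measure_iUnion_preimage_norm_ne_one (hμ : IsRotationInvariantOnSphere μ) {Ω ι : Type*}
    [MeasurableSpace Ω] [Countable ι] {Pr : Measure Ω} {v : ι → Ω → E}
    (hmeas : ∀ i, Measurable (v i)) (hlaw : ∀ i, Pr.map (v i) = μ) :
    Pr (⋃ i, v i ⁻¹' {x | ‖x‖ = 1}ᶜ) = 0 := measure_iUnion_null fun i => by
  rw [← Measure.map_apply (hmeas i) (measurableSet_eq_fun (by fun_prop) (by fun_prop)).compl,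
    hlaw i]
  exact hμ.ae_norm_eq_one

theorem integrable_of_continuous [FiniteDimensional ℝ E] [IsFiniteMeasure μ]
    (hμ : IsRotationInvariantOnSphere μ) {f : E → ℝ} (hf : Continuous f) : Integrable f μ := by
  obtain ⟨C, hC⟩ := (isCompact_sphere (0 : E) 1).exists_bound_of_continuousOn hf.continuousOn
  exact .of_bound hf.aestronglyMeasurable C <| hμ.ae_norm_eq_one.mono fun x hx =>
    hC x (mem_sphere_zero_iff_norm.mpr hx)

theorem integral_inner_sq_mul_inner_sq [FiniteDimensional ℝ E] [IsFiniteMeasure μ]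
    (hμ : IsRotationInvariantOnSphere μ) {e f : E}
    (he : ‖e‖ = 1) (hf : ‖f‖ = 1) (hef : ⟪e, f⟫ = 0) :
    ∫ x, ⟪x, e⟫ ^ 2 * ⟪x, f⟫ ^ 2 ∂μ = (∫ x, ⟪x, e⟫ ^ 4 ∂μ) / 3 := by
  -- `e + f` and `e - f` have norm `√2`, so their fourth moments are `4 ∫ x, ⟪x, e⟫ ^ 4 ∂μ`.
  have hadd : ‖e + f‖ ^ 4 = 4 := by
    rw [show 4 = 2 * 2 from rfl, pow_mul, norm_add_sq_real, he, hf, hef]; norm_num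
  have hsub : ‖e - f‖ ^ 4 = 4 := by
    rw [show 4 = 2 * 2 from rfl, pow_mul, norm_sub_sq_real, he, hf, hef]; norm_num
  have hpoint : ∀ x, ⟪x, e⟫ ^ 2 * ⟪x, f⟫ ^ 2 =
      (⟪x, e + f⟫ ^ 4 + ⟪x, e - f⟫ ^ 4 - 2 * ⟪x, e⟫ ^ 4 - 2 * ⟪x, f⟫ ^ 4) / 12 := fun x => by
    rw [inner_add_right, inner_sub_right]; ring
  simp_rw [hpoint]
  rw [integral_div, integral_sub, integral_sub, integral_add, integral_const_mul,
    integral_const_mul, hμ.integral_inner_pow he (e + f), hμ.integral_inner_pow he (e - f),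
    hμ.integral_inner_pow he f, hadd, hsub, hf]
  · ring
  all_goals exact hμ.integrable_of_continuous (by fun_prop)

variable [FiniteDimensional ℝ E] [IsProbabilityMeasure μ]

theorem integral_inner_sq (hμ : IsRotationInvariantOnSphere μ) {u : E} (hu : ‖u‖ = 1) :
    ∫ x, ⟪x, u⟫ ^ 2 ∂μ = 1 / finrank ℝ E := by
  have : Nontrivial E := nontrivial_of_ne u 0 (norm_ne_zero_iff.mp (by simp [hu]))
  set b := stdOrthonormalBasis ℝ E
  have hsum : ∑ j, ∫ x, ⟪x, b j⟫ ^ 2 ∂μ = 1 := by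
    rw [← integral_finsetSum _ fun j _ => hμ.integrable_of_continuous (by fun_prop)]
    rw [integral_congr_ae (g := fun _ => 1) (hμ.ae_norm_eq_one.mono fun x hx => ?_)]
    · simp
    · simpa [real_inner_comm, hx] using b.sum_sq_inner_right x
  have hb : ∀ j, ∫ x, ⟪x, b j⟫ ^ 2 ∂μ = ∫ x, ⟪x, u⟫ ^ 2 ∂μ := fun j => by
    rw [hμ.integral_inner_pow hu, b.norm_eq_one, one_pow, one_mul]
  simp only [hb, Finset.sum_const, Finset.card_univ, Fintype.card_fin, nsmul_eq_mul] at hsum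
  rw [eq_div_iff (by exact_mod_cast finrank_pos.ne')]
  linarith

theorem integral_inner_pow_four (hμ : IsRotationInvariantOnSphere μ) {u : E} (hu : ‖u‖ = 1) :
    ∫ x, ⟪x, u⟫ ^ 4 ∂μ = 3 / (finrank ℝ E * (finrank ℝ E + 2)) := by
  have : Nontrivial E := nontrivial_of_ne u 0 (norm_ne_zero_iff.mp (by simp [hu]))
  set n := finrank ℝ E
  set M := ∫ x, ⟪x, u⟫ ^ 4 ∂μ
  set b := stdOrthonormalBasis ℝ E
  set j₀ : Fin n := ⟨0, finrank_pos⟩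
  have hM : ∫ x, ⟪x, b j₀⟫ ^ 4 ∂μ = M := by
    rw [hμ.integral_inner_pow hu, b.norm_eq_one, one_pow, one_mul]
  have hterm : ∀ k, ∫ x, ⟪x, b j₀⟫ ^ 2 * ⟪x, b k⟫ ^ 2 ∂μ =
      M / 3 + if k = j₀ then 2 * M / 3 else 0 := fun k => by
    split_ifs with hk
    · simp only [hk, ← pow_add, hM]; ring
    · rw [hμ.integral_inner_sq_mul_inner_sq (b.norm_eq_one _) (b.norm_eq_one _)
        (b.orthonormal.2 (Ne.symm hk)), hM, add_zero]
  -- On the sphere, `∑ k, ⟪x, b j₀⟫ ^ 2 * ⟪x, b k⟫ ^ 2 = ⟪x, b j₀⟫ ^ 2 * ‖x‖ ^ 2 = ⟪x, b j₀⟫ ^ 2`.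
  have hsum : ∑ k, ∫ x, ⟪x, b j₀⟫ ^ 2 * ⟪x, b k⟫ ^ 2 ∂μ = 1 / n := by
    rw [← integral_finsetSum _ fun k _ => hμ.integrable_of_continuous (by fun_prop),
      ← hμ.integral_inner_sq (b.norm_eq_one j₀)]
    refine integral_congr_ae (hμ.ae_norm_eq_one.mono fun x hx => ?_)
    have := b.sum_sq_inner_right x
    simp only [real_inner_comm, hx, one_pow] at this
    simp [← Finset.mul_sum, this]
  simp only [hterm, Finset.sum_add_distrib, Finset.sum_ite_eq', Finset.mem_univ, if_true,
    Finset.sum_const, Finset.card_univ, Fintype.card_fin, nsmul_eq_mul] at hsum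
  have hn : (0 : ℝ) < n := by exact_mod_cast finrank_pos
  field_simp at hsum ⊢
  linarith

theorem one_div_twenty_le_measureReal_setOf_le_inner (hμ : IsRotationInvariantOnSphere μ)
    {u : E} (hu : ‖u‖ = 1) {ρ : ℝ} (hρ : 0 ≤ ρ) (hρn : finrank ℝ E * ρ ^ 2 ≤ 3 / 10) :
    1 / 20 ≤ μ.real {x | ρ ≤ ⟪x, u⟫} := by
  have : Nontrivial E := nontrivial_of_ne u 0 (norm_ne_zero_iff.mp (by simp [hu]))
  set n : ℝ := ((finrank ℝ E : ℕ) : ℝ)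
  have hn : 1 ≤ n := Nat.one_le_cast.mpr finrank_pos
  set q := μ.real {x | ρ ^ 2 ≤ ⟪x, u⟫ ^ 2}
  have hPZ := sq_integral_sub_le_measureReal_mul_integral_sq (μ := μ) (Z := fun x => ⟪x, u⟫ ^ 2)
    (by fun_prop) (hμ.integrable_of_continuous (by fun_prop))
    (hμ.integrable_of_continuous (by fun_prop)) (sq_nonneg ρ) <| by
      rw [hμ.integral_inner_sq hu, le_div_iff₀ (by positivity)]; linarith
  simp only [← pow_mul, hμ.integral_inner_sq hu, hμ.integral_inner_pow_four hu] at hPZ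
  -- `(7/10)² ≤ (1 - n ρ²)² ≤ n² q · 3/(n(n+2)) ≤ 3 q`
  have hq : 1 / 10 ≤ q := by
    have h1 : (1 - n * ρ ^ 2) ^ 2 = n ^ 2 * (1 / n - ρ ^ 2) ^ 2 := by field_simp
    have h2 : n ^ 2 * (q * (3 / (n * (n + 2)))) ≤ 3 * q := by
      rw [show n ^ 2 * (q * (3 / (n * (n + 2)))) = 3 * q * (n / (n + 2)) by field_simp]
      exact mul_le_of_le_one_right (by positivity) ((div_le_one (by positivity)).mpr (by linarith))
    nlinarith [mul_le_mul_of_nonneg_left hPZ (sq_nonneg n)]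
  have hsymm : μ.real {x | ρ ≤ ⟪x, -u⟫} = μ.real {x | ρ ≤ ⟪x, u⟫} := congrArg ENNReal.toReal <|
    calc μ {x | ρ ≤ ⟪x, -u⟫} = μ.map (⟪·, -u⟫) (Set.Ici ρ) :=
          (Measure.map_apply (by fun_prop : Measurable (⟪·, -u⟫)) measurableSet_Ici).symm
      _ = μ.map (⟪·, u⟫) (Set.Ici ρ) := by rw [hμ.map_inner_eq (norm_neg u)]
      _ = μ {x | ρ ≤ ⟪x, u⟫} :=
          Measure.map_apply (by fun_prop : Measurable (⟪·, u⟫)) measurableSet_Ici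
  have hsub : {x | ρ ^ 2 ≤ ⟪x, u⟫ ^ 2} ⊆ {x | ρ ≤ ⟪x, u⟫} ∪ {x | ρ ≤ ⟪x, -u⟫} := by
    intro x (hx : ρ ^ 2 ≤ ⟪x, u⟫ ^ 2)
    show ρ ≤ ⟪x, u⟫ ∨ ρ ≤ ⟪x, -u⟫
    rw [inner_neg_right, ← le_abs, ← abs_of_nonneg hρ]
    exact sq_le_sq.mp hx
  have hsplit := (measureReal_mono (μ := μ) hsub).trans (measureReal_union_le _ _)
  linarith

theorem measure_biUnion_iInter_inner_lt_le (hμ : IsRotationInvariantOnSphere μ) {Ω : Type*}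
    [MeasurableSpace Ω] {Pr : Measure Ω} {m : ℕ} {v : Fin m → Ω → E} (hmeas : ∀ i, Measurable (v i))
    (hlaw : ∀ i, Pr.map (v i) = μ) (hindep : iIndepFun v Pr) {T : Finset E}
    (hT : ∀ t ∈ T, ‖t‖ = 1) {ρ : ℝ} (hρ : 0 ≤ ρ) (hρn : finrank ℝ E * ρ ^ 2 ≤ 3 / 10) :
    Pr (⋃ t ∈ T, ⋂ i, v i ⁻¹' {x | ⟪x, t⟫ < ρ}) ≤
      T.card * ENNReal.ofReal (Real.exp (-m / 20)) := by
  have hmiss : ∀ t ∈ T, μ {x | ⟪x, t⟫ < ρ} ≤ ENNReal.ofReal (19 / 20) := fun t ht => by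
    have hS : MeasurableSet {x | ρ ≤ ⟪x, t⟫} := measurableSet_le measurable_const (by fun_prop)
    rw [← ofReal_measureReal, show {x | ⟪x, t⟫ < ρ} = {x | ρ ≤ ⟪x, t⟫}ᶜ by ext; simp,
      probReal_compl_eq_one_sub hS]
    exact ENNReal.ofReal_le_ofReal
      (by linarith [hμ.one_div_twenty_le_measureReal_setOf_le_inner (hT t ht) hρ hρn])
  refine (measure_biUnion_iInter_preimage_le hmeas hlaw hindep
    (fun t _ => measurableSet_lt (by fun_prop) measurable_const) hmiss).trans ?_
  rw [Fintype.card_fin, ← ENNReal.ofReal_pow (by norm_num)]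
  gcongr
  calc ((19 : ℝ) / 20) ^ m ≤ Real.exp (-1 / 20) ^ m := by
        gcongr; linarith [Real.one_sub_le_exp_neg (1 / 20 : ℝ)]
    _ = Real.exp (-m / 20) := by rw [← Real.exp_nat_mul]; ring_nf

theorem one_sub_le_measure_closedBall_subset_convexHull [Nontrivial E]
    (hμ : IsRotationInvariantOnSphere μ) {Ω : Type*} [MeasurableSpace Ω] {Pr : Measure Ω}
    [IsProbabilityMeasure Pr] {m : ℕ} {v : Fin m → Ω → E} (hmeas : ∀ i, Measurable (v i))
    (hlaw : ∀ i, Pr.map (v i) = μ) (hindep : iIndepFun v Pr)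
    (hm : 50 * √(finrank ℝ E) ≤ m - 1) :
    1 - ENNReal.ofReal (m ^ finrank ℝ E * Real.exp (-m / 20)) ≤
      Pr {ω | closedBall (0 : E) (1 / (2 * √(finrank ℝ E))) ⊆
        convexHull ℝ (Set.range (v · ω))} := by
  set n := finrank ℝ E
  have hm1 : (1 : ℝ) < m := by
    nlinarith [Real.one_le_sqrt.mpr (show (1 : ℝ) ≤ n by exact_mod_cast finrank_pos)]
  have : Nonempty (Fin m) := ⟨⟨0, by exact_mod_cast zero_lt_one.trans hm1⟩⟩
  set δ := 1 / ((m : ℝ) - 1)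
  set ρ := 1 / (2 * √n) + 2 * δ
  obtain ⟨T, hTS, hTnet, hcard⟩ := exists_finset_subset_forall_dist_le_card_le zero_le_one
    (sphere_subset_closedBall (x := (0 : E)) (ε := 1)) (show 0 < δ by positivity)
  rw [show 1 / δ + 1 = m by simp [δ]] at hcard
  set bad := (⋃ t ∈ T, ⋂ i, v i ⁻¹' {x | ⟪x, t⟫ < ρ}) ∪ ⋃ i, v i ⁻¹' {x | ‖x‖ = 1}ᶜ
  have hbad : Pr bad ≤ ENNReal.ofReal (m ^ n * Real.exp (-m / 20)) := by
    refine (measure_union_le _ _).trans ?_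
    rw [hμ.measure_iUnion_preimage_norm_ne_one hmeas hlaw, add_zero,
      ENNReal.ofReal_mul (by positivity)]
    refine (hμ.measure_biUnion_iInter_inner_lt_le hmeas hlaw hindep
      (fun t ht => by simpa using hTS ht) (by positivity)
      (mul_sq_one_div_two_mul_sqrt_add_le (by exact_mod_cast finrank_pos) hm)).trans ?_
    gcongr
    rw [← ENNReal.ofReal_natCast]
    exact ENNReal.ofReal_le_ofReal (by exact_mod_cast hcard)
  have hgood :
      badᶜ ⊆ {ω | closedBall (0 : E) (1 / (2 * √n)) ⊆ convexHull ℝ (Set.range (v · ω))} := by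
    intro ω hω
    simp only [bad, Set.compl_union, Set.compl_iUnion, Set.mem_inter_iff, Set.mem_iInter,
      Set.mem_compl_iff, Set.mem_preimage, Set.mem_ofPred_eq, not_not] at hω
    refine closedBall_subset_convexHull_of_forall_dist_le (Set.finite_range _)
      (Set.range_nonempty _) (by simp [hω.2]) (fun u hu => hTnet u (by simpa using hu))
      fun t ht => ?_
    obtain ⟨i, hi⟩ := by simpa using hω.1 t ht
    exact ⟨v i ω, Set.mem_range_self i, hi⟩
  calc 1 - ENNReal.ofReal (m ^ n * Real.exp (-m / 20)) ≤ 1 - Pr bad := tsub_le_tsub_left hbad 1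
    _ ≤ Pr badᶜ := tsub_le_iff_left.mpr (measure_univ (μ := Pr) ▸ measure_univ_le_add_compl bad)
    _ ≤ _ := measure_mono hgood

end IsRotationInvariantOnSphere

end Sphere

/-- Average-case volume bound for spherical random polytopes: if `v_1, …, v_m` are i.i.d.
uniform on `S^{d-1}` (`d ≥ 6`, `m ≥ d+1`), then with probability at least
`1 − 2·exp(d·log m − m/20)` the convex hull `P` contains the ball of radius `1/(2√d)`,
and consequently `varv(P) ≥ (1/(2√d))^d`. -/
theorem stmt10 (d m : ℕ) (hd : 6 ≤ d) (hm : d + 1 ≤ m)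
    (μ : Measure (EuclideanSpace ℝ (Fin d))) [IsProbabilityMeasure μ]
    (hsupp : μ {x : EuclideanSpace ℝ (Fin d) | ‖x‖ = 1}ᶜ = 0)
    (hrot : ∀ O : EuclideanSpace ℝ (Fin d) ≃ₗᵢ[ℝ] EuclideanSpace ℝ (Fin d),
      Measure.map (fun x => O x) μ = μ)
    {Ω : Type*} [MeasurableSpace Ω] (Pr : Measure Ω) [IsProbabilityMeasure Pr]
    (v : Fin m → Ω → EuclideanSpace ℝ (Fin d))
    (hmeas : ∀ i, Measurable (v i))
    (hlaw : ∀ i, Measure.map (v i) Pr = μ)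
    (hindep : iIndepFun v Pr) :
    1 - ENNReal.ofReal (2 * Real.exp ((d : ℝ) * Real.log m - (m : ℝ) / 20)) ≤
      Pr {ω | closedBall (0 : EuclideanSpace ℝ (Fin d)) (1 / (2 * Real.sqrt d)) ⊆
            convexHull ℝ (Set.range fun i => v i ω) ∧
          (1 / (2 * Real.sqrt d)) ^ d ≤
            varv (convexHull ℝ (Set.range fun i => v i ω))} := by
  rcases le_or_gt 1 (2 * Real.exp ((d : ℝ) * Real.log m - (m : ℝ) / 20)) with hbig | hsmall
  · rw [tsub_eq_zero_of_le (ENNReal.one_le_ofReal.mpr hbig)]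
    exact zero_le
  have hn : finrank ℝ (EuclideanSpace ℝ (Fin d)) = d := finrank_euclideanSpace_fin
  have : Nontrivial (EuclideanSpace ℝ (Fin d)) :=
    Module.nontrivial_of_finrank_pos (by rw [hn]; omega)
  have hball := IsRotationInvariantOnSphere.one_sub_le_measure_closedBall_subset_convexHull
    ⟨hsupp, hrot⟩ hmeas hlaw hindep
    (by rw [hn]; exact fifty_mul_sqrt_le_sub_one_of_two_mul_exp_lt_one hd hm hsmall)
  rw [hn] at hball
  have hexp : (m : ℝ) ^ d * Real.exp (-m / 20) = Real.exp (d * Real.log m - m / 20) := by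
    have hm0 : (0 : ℝ) < m := by exact_mod_cast (show 0 < m by omega)
    rw [sub_eq_add_neg, Real.exp_add, Real.exp_nat_mul, Real.exp_log hm0, neg_div]
  refine le_trans (tsub_le_tsub_left (ENNReal.ofReal_le_ofReal ?_) 1)
    (hball.trans (measure_mono fun ω hω => ⟨hω, ?_⟩))
  · rw [hexp]; linarith [Real.exp_pos (d * Real.log m - m / 20)]
  · rw [← varv_closedBall (by omega) (by positivity)]
    exact varv_mono hω ((Set.finite_range _).isCompact_convexHull (𝕜 := ℝ)).measure_lt_top.ne
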